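/- Let e = (1,3,2,2) ∈ ℤ^4, so that Q_17(e) = 0, and let M = {x ∈ ℤ^4 : B_17(x, e) = 0}. Then the subgroup of M generated by e together with all roots of M (i.e., all r ∈ M with Q_17(r) > 0 such that Q_17(r) divides 2·B_17(r, x) for every x ∈ M) is a proper subgroup of M. -/

import Mathlib

/-- The bilinear form `B_p(x,y) = -p·x_0·y_0 + x_1·y_1 + … + x_n·y_n` on `ℤ^{n+1}`. -/
def Bform (p : ℤ) {n : ℕ} (x y : Fin (n + 1) → ℤ) : ℤ :=
  -p * x 0 * y 0 + ∑ i ∈ Finset.univ.filter (fun i : Fin (n + 1) => i ≠ 0), x i * y i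

/-- The quadratic form `Q_p(x) = B_p(x,x)`. -/
def Qform (p : ℤ) {n : ℕ} (x : Fin (n + 1) → ℤ) : ℤ := Bform p x x

/-- The primitive null vector `e`. -/
def eVec : Fin 4 → ℤ := ![1, 3, 2, 2]

/-!
Put `u = (0,2,-3,0)` and `v = (0,0,1,-1)`. Then `e^⊥ = ℤe ⊕ ℤu ⊕ ℤv`, and since `e` is null and
orthogonal to `e^⊥`, the form on `ae + bu + cv` is the binary form `q(b,c) = 13b² - 6bc + 2c²` of
determinant `17`. For a root `r = ae + bu + cv`, `q(b,c)` divides `2B(r,u) = 2(13b - 3c)` and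
`2B(r,v) = 2(-3b + 2c)`, hence `34b`. If `b` were odd, `q` would be odd, so `q ∣ 17b`; as
`q = (c - 2b)² + (c - b)² + 8b² > 8b²`, this forces `b = ±1` and `q = 17`, i.e. `c² - 3bc = 2`,
which is impossible modulo `3`. So `e` and all roots lie in the index-two subgroup where `b`, or
equivalently `x₂ + x₃`, is even, and `u` is not in it.
-/

def IsLatticeRoot (p : ℤ) {n : ℕ} (M : Set (Fin (n + 1) → ℤ)) (r : Fin (n + 1) → ℤ) : Prop :=
  r ∈ M ∧ 0 < Qform p r ∧ ∀ x ∈ M, Qform p r ∣ 2 * Bform p r x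

lemma Bform_fin_four (p : ℤ) (x y : Fin 4 → ℤ) :
    Bform p x y = -p * x 0 * y 0 + (x 1 * y 1 + x 2 * y 2 + x 3 * y 3) := by
  rw [Bform, Finset.sum_filter, Fin.sum_univ_four]
  simp

lemma Bform_eVec (x : Fin 4 → ℤ) :
    Bform 17 x eVec = -17 * x 0 + 3 * x 1 + 2 * x 2 + 2 * x 3 := by
  rw [Bform_fin_four]
  simp only [eVec, Matrix.cons_val_zero, Matrix.cons_val_one, Matrix.cons_val_two,
    Matrix.cons_val_three, Matrix.head_cons, Matrix.tail_cons]
  ring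

/-- `orthVec a b c = a • e + b • u + c • v`. -/
def orthVec (a b c : ℤ) : Fin 4 → ℤ := ![a, 3 * a + 2 * b, 2 * a - 3 * b + c, 2 * a - c]

lemma eVec_eq_orthVec : eVec = orthVec 1 0 0 := by
  decide

lemma Bform_eVec_eq_zero_iff (x : Fin 4 → ℤ) :
    Bform 17 x eVec = 0 ↔ ∃ a b c, x = orthVec a b c := by
  rw [Bform_eVec]
  constructor
  · intro h
    obtain ⟨b, hb⟩ : (2 : ℤ) ∣ x 1 - 3 * x 0 := by omega
    refine ⟨x 0, b, 2 * x 0 - x 3, ?_⟩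
    ext i
    fin_cases i <;> simp [orthVec] <;> omega
  · rintro ⟨a, b, c, rfl⟩
    simp only [orthVec, Matrix.cons_val_zero, Matrix.cons_val_one, Matrix.cons_val_two,
      Matrix.cons_val_three, Matrix.head_cons, Matrix.tail_cons]
    ring

lemma orthVec_mem (a b c : ℤ) : Bform 17 (orthVec a b c) eVec = 0 :=
  (Bform_eVec_eq_zero_iff _).2 ⟨a, b, c, rfl⟩

lemma Bform_orthVec (a b c a' b' c' : ℤ) :
    Bform 17 (orthVec a b c) (orthVec a' b' c') =
      13 * b * b' - 3 * (b * c' + c * b') + 2 * c * c' := by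
  rw [Bform_fin_four]
  simp only [orthVec, Matrix.cons_val_zero, Matrix.cons_val_one, Matrix.cons_val_two,
    Matrix.cons_val_three, Matrix.head_cons, Matrix.tail_cons]
  ring

lemma Qform_orthVec (a b c : ℤ) :
    Qform 17 (orthVec a b c) = 13 * b ^ 2 - 6 * b * c + 2 * c ^ 2 := by
  rw [Qform, Bform_orthVec]
  ring

lemma Qform_eVec : Qform 17 eVec = 0 := by
  rw [eVec_eq_orthVec, Qform_orthVec]
  norm_num

lemma even_of_binaryForm_dvd_two_mul {b c : ℤ}
    (hu : 13 * b ^ 2 - 6 * b * c + 2 * c ^ 2 ∣ 2 * (13 * b - 3 * c))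
    (hv : 13 * b ^ 2 - 6 * b * c + 2 * c ^ 2 ∣ 2 * (-3 * b + 2 * c)) : Even b := by
  set q := 13 * b ^ 2 - 6 * b * c + 2 * c ^ 2
  by_contra hb
  rw [Int.not_even_iff_odd] at hb
  have hq_odd : Odd q := by
    obtain ⟨k, rfl⟩ := hb
    exact ⟨26 * k ^ 2 + 26 * k + 6 - 3 * (2 * k + 1) * c + c ^ 2, by ring⟩
  have hq17 : q ∣ 17 * b := by
    have h34 := hu.linear_comb hv 2 3
    rw [show 2 * (2 * (13 * b - 3 * c)) + 3 * (2 * (-3 * b + 2 * c)) = 2 * (17 * b) by ring]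
      at h34
    exact (Int.isCoprime_two_right.2 hq_odd).dvd_of_dvd_mul_left h34
  have hb0 : b ≠ 0 := by rintro rfl; exact absurd hb (by decide)
  have hq_le : q ≤ 17 * |b| := by
    simpa [abs_mul] using Int.le_of_dvd (by positivity) ((dvd_abs _ _).2 hq17)
  have hq_gt : 8 * b ^ 2 < q := by
    have hq_sq : q = (c - 2 * b) ^ 2 + (c - b) ^ 2 + 8 * b ^ 2 := by ring
    have hq_ne : q ≠ 8 * b ^ 2 := fun h =>
      Int.not_even_iff_odd.2 hq_odd (h ▸ ⟨4 * b ^ 2, by ring⟩)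
    exact lt_of_le_of_ne (by rw [hq_sq]; nlinarith [sq_nonneg (c - 2 * b), sq_nonneg (c - b)])
      hq_ne.symm
  have hb1 : b = 1 ∨ b = -1 := by
    have hb2 : |b| ≤ 2 := by nlinarith [sq_abs b, abs_nonneg b]
    obtain ⟨k, rfl⟩ := hb
    rw [abs_le] at hb2
    omega
  have hq_eq : q = 17 := by
    have h17 : q ∣ 17 := by rcases hb1 with rfl | rfl <;> simpa using hq17
    have h := (by norm_num : Nat.Prime 17).eq_one_or_self_of_dvd _ (Int.natAbs_dvd_natAbs.2 h17)
    have : 8 < q := by rcases hb1 with rfl | rfl <;> simpa using hq_gt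
    omega
  have hc : c ^ 2 = 3 * (b * c) + 2 := by
    rcases hb1 with rfl | rfl <;> linarith
  -- `2` is not a square modulo `3`
  have h3 := congrArg (Int.cast : ℤ → ZMod 3) hc
  push_cast at h3
  generalize (b : ZMod 3) = y, (c : ZMod 3) = x at h3
  revert x y
  decide

lemma two_dvd_of_isLatticeRoot {r : Fin 4 → ℤ}
    (hr : IsLatticeRoot 17 {x | Bform 17 x eVec = 0} r) : 2 ∣ r 2 + r 3 := by
  obtain ⟨hrM, -, hdvd⟩ := hr
  obtain ⟨a, b, c, rfl⟩ := (Bform_eVec_eq_zero_iff r).1 hrM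
  have hu := hdvd (orthVec 0 1 0) (orthVec_mem 0 1 0)
  have hv := hdvd (orthVec 0 0 1) (orthVec_mem 0 0 1)
  rw [Qform_orthVec, Bform_orthVec] at hu hv
  obtain ⟨k, rfl⟩ : Even b := even_of_binaryForm_dvd_two_mul
    (hu.trans (dvd_of_eq (by ring))) (hv.trans (dvd_of_eq (by ring)))
  exact ⟨2 * a - 3 * k, by simp only [orthVec, Matrix.cons_val_two, Matrix.cons_val_three,
    Matrix.head_cons, Matrix.tail_cons]; ring⟩

def evenOrth : AddSubgroup (Fin 4 → ℤ) where
  carrier := {x | Bform 17 x eVec = 0 ∧ 2 ∣ x 2 + x 3}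
  zero_mem' := by simp [Bform_eVec]
  add_mem' := by
    rintro x y ⟨hx, hx2⟩ ⟨hy, hy2⟩
    simp only [Bform_eVec, Set.mem_ofPred_eq, Pi.add_apply] at *
    constructor <;> omega
  neg_mem' := by
    rintro x ⟨hx, hx2⟩
    simp only [Bform_eVec, Set.mem_ofPred_eq, Pi.neg_apply] at *
    constructor <;> omega

lemma closure_isLatticeRoot_le_evenOrth :
    AddSubgroup.closure (insert eVec {r | IsLatticeRoot 17 {x | Bform 17 x eVec = 0} r}) ≤
      evenOrth := by
  rw [AddSubgroup.closure_le]
  rintro r (rfl | hr)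
  · exact ⟨Qform_eVec, by decide⟩
  · exact ⟨hr.1, two_dvd_of_isLatticeRoot hr⟩

lemma orthVec_not_mem_evenOrth : orthVec 0 1 0 ∉ evenOrth := fun h => absurd h.2 (by decide)

theorem stmt16 :
    Qform 17 eVec = 0 ∧
    ((AddSubgroup.closure (insert eVec
        {r : Fin 4 → ℤ | Bform 17 r eVec = 0 ∧ 0 < Qform 17 r ∧
          ∀ x : Fin 4 → ℤ, Bform 17 x eVec = 0 → Qform 17 r ∣ 2 * Bform 17 r x}) :
        Set (Fin 4 → ℤ)) ⊂ {x : Fin 4 → ℤ | Bform 17 x eVec = 0}) :=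
  ⟨Qform_eVec, fun _ hx => (closure_isLatticeRoot_le_evenOrth hx).1,
    fun hM => orthVec_not_mem_evenOrth
      (closure_isLatticeRoot_le_evenOrth (hM (orthVec_mem 0 1 0)))⟩
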